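/- arXiv:2509.25481 — 4 statements merged into one kernel-verified Lean document; each statement's English description precedes it below -/
import Mathlib

section
/- Under Setup S, the pairwise-disparity feasible set equals the union over admissible centroid vectors of the centroid-specific feasible sets: 𝔉₀ = ⋃_{q ∈ Q} 𝔉(q). -/
/-- The standard inner product on `ℝ³`. -/
noncomputable def dp (u v : Fin 3 → ℝ) : ℝ := ∑ i, u i * v i

/-- The pairwise-disparity feasible set `𝔉₀`. -/
def pairwiseFeasible {𝒜 KL KLF : Type*}
    (R : 𝒜 → Set (Fin 3 → ℝ))
    (uL : KL → 𝒜 → Fin 3 → ℝ) (δL : KL → ℝ)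
    (uLF vLF : KLF → 𝒜 → Fin 3 → ℝ) (δF : KLF → ℝ) :
    Set (𝒜 → Fin 3 → ℝ) :=
  {ρ | (∀ a, ρ a ∈ R a) ∧
    (∀ ℓ a a', |dp (uL ℓ a) (ρ a) - dp (uL ℓ a') (ρ a')| ≤ δL ℓ) ∧
    (∀ k a a', |dp (uLF k a) (ρ a) / dp (vLF k a) (ρ a)
      - dp (uLF k a') (ρ a') / dp (vLF k a') (ρ a')| ≤ δF k)}

/-- The centroid-specific feasible set `𝔉(q)`. -/
def centroidFeasible {𝒜 KL KLF : Type*}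
    (R : 𝒜 → Set (Fin 3 → ℝ))
    (uL : KL → 𝒜 → Fin 3 → ℝ) (δL : KL → ℝ)
    (uLF vLF : KLF → 𝒜 → Fin 3 → ℝ) (δF : KLF → ℝ)
    (q : KLF → ℝ) :
    Set (𝒜 → Fin 3 → ℝ) :=
  {ρ | (∀ a, ρ a ∈ R a) ∧
    (∃ qL : KL → ℝ, ∀ ℓ a, |dp (uL ℓ a) (ρ a) - qL ℓ| ≤ δL ℓ / 2) ∧
    (∀ k a,
      dp (uLF k a) (ρ a) - (q k + δF k / 2) * dp (vLF k a) (ρ a) ≤ 0 ∧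
      (q k - δF k / 2) * dp (vLF k a) (ρ a) - dp (uLF k a) (ρ a) ≤ 0)}

/-- The set of admissible centroid vectors `Q`. -/
def admissibleCentroids {KLF : Type*} (δF : KLF → ℝ) : Set (KLF → ℝ) :=
  {q | ∀ k, q k ∈ Set.Icc (δF k / 2) (1 - δF k / 2)}

theorem pairwiseFeasible_eq_iUnion_centroidFeasible
    {𝒜 KL KLF : Type*} [Fintype 𝒜] [Nonempty 𝒜] [Fintype KL] [Fintype KLF]
    (R : 𝒜 → Set (Fin 3 → ℝ))
    (uL : KL → 𝒜 → Fin 3 → ℝ) (δL : KL → ℝ) (hδL : ∀ ℓ, 0 ≤ δL ℓ)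
    (uLF vLF : KLF → 𝒜 → Fin 3 → ℝ) (δF : KLF → ℝ)
    (hδF : ∀ k, 0 ≤ δF k ∧ δF k ≤ 1)
    (hval : ∀ a k, ∀ ρ ∈ R a,
      0 < dp (vLF k a) ρ ∧ 0 ≤ dp (uLF k a) ρ ∧ dp (uLF k a) ρ ≤ dp (vLF k a) ρ) :
    pairwiseFeasible R uL δL uLF vLF δF
      = ⋃ q ∈ admissibleCentroids δF, centroidFeasible R uL δL uLF vLF δF q := by
  classical
  ext ρ
  simp only [pairwiseFeasible, centroidFeasible, admissibleCentroids, Set.mem_iUnion,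
    Set.mem_setOf_eq, Set.mem_Icc]
  have hne : (Finset.univ : Finset 𝒜).Nonempty := Finset.univ_nonempty
  constructor
  · rintro ⟨hR, hL, hF⟩
    -- ratios
    have hr0 : ∀ k a, 0 ≤ dp (uLF k a) (ρ a) / dp (vLF k a) (ρ a) := fun k a =>
      div_nonneg (hval a k _ (hR a)).2.1 (le_of_lt (hval a k _ (hR a)).1)
    have hr1 : ∀ k a, dp (uLF k a) (ρ a) / dp (vLF k a) (ρ a) ≤ 1 := fun k a => by
      have h := hval a k _ (hR a)
      rw [div_le_one h.1]; exact h.2.2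
    have keyL : ∀ ℓ, ∃ qℓ : ℝ, ∀ a, |dp (uL ℓ a) (ρ a) - qℓ| ≤ δL ℓ / 2 := by
      intro ℓ
      set f : 𝒜 → ℝ := fun a => dp (uL ℓ a) (ρ a) with hf
      refine ⟨(Finset.univ.inf' hne f + Finset.univ.sup' hne f) / 2, fun a => ?_⟩
      have hm : Finset.univ.inf' hne f ≤ f a := Finset.inf'_le _ (Finset.mem_univ a)
      have hM : f a ≤ Finset.univ.sup' hne f := Finset.le_sup' _ (Finset.mem_univ a)
      obtain ⟨a1, -, hM1⟩ := Finset.exists_mem_eq_sup' hne f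
      obtain ⟨a2, -, hm2⟩ := Finset.exists_mem_eq_inf' hne f
      have hMm : Finset.univ.sup' hne f - Finset.univ.inf' hne f ≤ δL ℓ := by
        have h := hL ℓ a1 a2
        rw [abs_le] at h
        rw [hM1, hm2]
        exact sub_le_iff_le_add.mpr (by linarith [h.2])
      rw [abs_le]
      constructor <;> linarith
    choose qL hqL using keyL
    have keyF : ∀ k, ∃ qk : ℝ, (δF k / 2 ≤ qk ∧ qk ≤ 1 - δF k / 2) ∧
        ∀ a, |dp (uLF k a) (ρ a) / dp (vLF k a) (ρ a) - qk| ≤ δF k / 2 := by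
      intro k
      set f : 𝒜 → ℝ := fun a => dp (uLF k a) (ρ a) / dp (vLF k a) (ρ a) with hf
      have hd : δF k / 2 ≤ 1 - δF k / 2 := by linarith [(hδF k).1, (hδF k).2]
      refine ⟨min (max ((Finset.univ.inf' hne f + Finset.univ.sup' hne f) / 2) (δF k / 2))
        (1 - δF k / 2), ⟨le_min (le_max_right _ _) hd, min_le_right _ _⟩, fun a => ?_⟩
      have hm : Finset.univ.inf' hne f ≤ f a := Finset.inf'_le _ (Finset.mem_univ a)
      have hM : f a ≤ Finset.univ.sup' hne f := Finset.le_sup' _ (Finset.mem_univ a)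
      obtain ⟨a1, -, hM1⟩ := Finset.exists_mem_eq_sup' hne f
      obtain ⟨a2, -, hm2⟩ := Finset.exists_mem_eq_inf' hne f
      have hMm : Finset.univ.sup' hne f - Finset.univ.inf' hne f ≤ δF k := by
        have h := hF k a1 a2
        rw [abs_le] at h
        rw [hM1, hm2]
        exact sub_le_iff_le_add.mpr (by linarith [h.2])
      have h0 : 0 ≤ Finset.univ.inf' hne f := hm2 ▸ hr0 k a2
      have h1 : Finset.univ.sup' hne f ≤ 1 := hM1 ▸ hr1 k a1
      have hfa0 : 0 ≤ f a := hr0 k a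
      have hfa1 : f a ≤ 1 := hr1 k a
      rw [abs_le]
      rcases min_cases ((Finset.univ.inf' hne f + Finset.univ.sup' hne f) / 2 ⊔ δF k / 2)
          (1 - δF k / 2) with ⟨hq, hcmp⟩ | ⟨hq, hcmp⟩ <;>
        rcases max_cases ((Finset.univ.inf' hne f + Finset.univ.sup' hne f) / 2) (δF k / 2)
          with ⟨hq2, hcmp2⟩ | ⟨hq2, hcmp2⟩ <;>
        constructor <;> linarith [hq, hq2]
    choose q hq1 hq2 using keyF
    refine ⟨q, fun k => hq1 k, hR, ⟨qL, hqL⟩, fun k a => ?_⟩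
    have hv := (hval a k _ (hR a)).1
    have h := hq2 k a
    rw [abs_le] at h
    constructor
    · have : dp (uLF k a) (ρ a) / dp (vLF k a) (ρ a) ≤ q k + δF k / 2 := by linarith [h.2]
      rw [div_le_iff₀ hv] at this
      linarith
    · have : q k - δF k / 2 ≤ dp (uLF k a) (ρ a) / dp (vLF k a) (ρ a) := by linarith [h.1]
      rw [le_div_iff₀ hv] at this
      linarith
  · rintro ⟨q, hqQ, hR, ⟨qL, hqL⟩, hFq⟩
    refine ⟨hR, fun ℓ a a' => ?_, fun k a a' => ?_⟩
    · have h1 := hqL ℓ a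
      have h2 := hqL ℓ a'
      rw [abs_le] at h1 h2 ⊢
      constructor <;> linarith [h1.1, h1.2, h2.1, h2.2]
    · have hbd : ∀ b, q k - δF k / 2 ≤ dp (uLF k b) (ρ b) / dp (vLF k b) (ρ b) ∧
          dp (uLF k b) (ρ b) / dp (vLF k b) (ρ b) ≤ q k + δF k / 2 := by
        intro b
        have hv := (hval b k _ (hR b)).1
        have h := hFq k b
        constructor
        · rw [le_div_iff₀ hv]; linarith [h.2]
        · rw [div_le_iff₀ hv]; linarith [h.1]
      have h1 := hbd a
      have h2 := hbd a'
      rw [abs_le]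
      constructor <;> linarith [h1.1, h1.2, h2.1, h2.2]
end

section
/- Under Setup S, fix loss-coefficient vectors γ_a ∈ ℝ³ for each a ∈ 𝒜 and define the objective J((ρ_a)_{a∈𝒜}) := Σ_{a∈𝒜} ⟨γ_a, ρ_a⟩. Then the infimum of J over the pairwise-disparity feasible set 𝔉₀ equals the infimum over admissible centroid vectors q ∈ Q of Φ(q), where Φ(q) is the infimum of J over the centroid-specific feasible set 𝔉(q) (both infima taken in the extended reals). -/
theorem value_eq_min_over_centroids
    {𝒜 KL KLF : Type*} [Fintype 𝒜] [Nonempty 𝒜] [Fintype KL] [Fintype KLF]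
    (R : 𝒜 → Set (Fin 3 → ℝ))
    (uL : KL → 𝒜 → Fin 3 → ℝ) (δL : KL → ℝ) (hδL : ∀ ℓ, 0 ≤ δL ℓ)
    (uLF vLF : KLF → 𝒜 → Fin 3 → ℝ) (δF : KLF → ℝ)
    (hδF : ∀ k, 0 ≤ δF k ∧ δF k ≤ 1)
    (hval : ∀ a k, ∀ ρ ∈ R a,
      0 < dp (vLF k a) ρ ∧ 0 ≤ dp (uLF k a) ρ ∧ dp (uLF k a) ρ ≤ dp (vLF k a) ρ)
    (γ : 𝒜 → Fin 3 → ℝ) :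
    sInf ((fun ρ : 𝒜 → Fin 3 → ℝ => ((∑ a, dp (γ a) (ρ a) : ℝ) : EReal)) ''
        pairwiseFeasible R uL δL uLF vLF δF)
      = sInf ((fun q : KLF → ℝ =>
          sInf ((fun ρ : 𝒜 → Fin 3 → ℝ => ((∑ a, dp (γ a) (ρ a) : ℝ) : EReal)) ''
            centroidFeasible R uL δL uLF vLF δF q)) '' admissibleCentroids δF) := by
  refine le_antisymm ?_ ?_
  · -- LHS ≤ RHS
    apply le_sInf
    rintro x ⟨q, hq, rfl⟩
    apply le_sInf
    rintro y ⟨ρ, hρ, rfl⟩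
    apply sInf_le
    refine ⟨ρ, ?_, rfl⟩
    obtain ⟨hR, ⟨qL, hqL⟩, hF⟩ := hρ
    refine ⟨hR, ?_, ?_⟩
    · intro ℓ a a'
      have h1 := abs_le.mp (hqL ℓ a)
      have h2 := abs_le.mp (hqL ℓ a')
      rw [abs_le]; constructor <;> linarith
    · intro k a a'
      have bound : ∀ b : 𝒜, q k - δF k / 2 ≤
          dp (uLF k b) (ρ b) / dp (vLF k b) (ρ b) ∧
          dp (uLF k b) (ρ b) / dp (vLF k b) (ρ b) ≤ q k + δF k / 2 := by
        intro b
        have hv := (hval b k (ρ b) (hR b)).1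
        obtain ⟨h1, h2⟩ := hF k b
        constructor
        · rw [le_div_iff₀ hv]; linarith
        · rw [div_le_iff₀ hv]; linarith
      obtain ⟨ha1, ha2⟩ := bound a
      obtain ⟨hb1, hb2⟩ := bound a'
      rw [abs_le]; constructor <;> linarith
  · -- RHS ≤ LHS
    apply le_sInf
    rintro x ⟨ρ, hρ, rfl⟩
    obtain ⟨hR, hL, hF⟩ := hρ
    set f : KLF → 𝒜 → ℝ := fun k a => dp (uLF k a) (ρ a) / dp (vLF k a) (ρ a) with hf
    have hne : ∀ k : KLF, (Finset.univ.image (f k)).Nonempty :=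
      fun k => (Finset.univ_nonempty).image _
    set M : KLF → ℝ := fun k => (Finset.univ.image (f k)).max' (hne k) with hMdef
    set m : KLF → ℝ := fun k => (Finset.univ.image (f k)).min' (hne k) with hmdef
    set q : KLF → ℝ := fun k => max (δF k / 2) (min ((m k + M k) / 2) (1 - δF k / 2))
      with hqdef
    have hmle : ∀ k a, m k ≤ f k a := fun k a =>
      Finset.min'_le _ _ (Finset.mem_image_of_mem _ (Finset.mem_univ a))
    have hMge : ∀ k a, f k a ≤ M k := fun k a =>
      Finset.le_max' _ _ (Finset.mem_image_of_mem _ (Finset.mem_univ a))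
    have hfrange : ∀ k a, 0 ≤ f k a ∧ f k a ≤ 1 := by
      intro k a
      obtain ⟨hv, hu0, huv⟩ := hval a k (ρ a) (hR a)
      exact ⟨div_nonneg hu0 hv.le, (div_le_one hv).mpr huv⟩
    have hMm : ∀ k, M k - m k ≤ δF k := by
      intro k
      obtain ⟨a1, -, ha1⟩ := Finset.mem_image.mp ((Finset.univ.image (f k)).max'_mem (hne k))
      obtain ⟨a0, -, ha0⟩ := Finset.mem_image.mp ((Finset.univ.image (f k)).min'_mem (hne k))
      have := abs_le.mp (hF k a1 a0)
      simp only [hf] at ha1 ha0 this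
      rw [show M k = f k a1 from ha1.symm, show m k = f k a0 from ha0.symm]
      simp only [hf]
      linarith [this.2]
    have hm0 : ∀ k, 0 ≤ m k := by
      intro k
      obtain ⟨a0, -, ha0⟩ := Finset.mem_image.mp ((Finset.univ.image (f k)).min'_mem (hne k))
      rw [show m k = f k a0 from ha0.symm]
      exact (hfrange k a0).1
    have hM1 : ∀ k, M k ≤ 1 := by
      intro k
      obtain ⟨a1, -, ha1⟩ := Finset.mem_image.mp ((Finset.univ.image (f k)).max'_mem (hne k))
      rw [show M k = f k a1 from ha1.symm]
      exact (hfrange k a1).2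
    have hqQ : q ∈ admissibleCentroids δF := by
      intro k
      obtain ⟨hδ0, hδ1⟩ := hδF k
      exact ⟨le_max_left _ _, max_le (by linarith) (min_le_right _ _)⟩
    have hbound : ∀ k a, q k - δF k / 2 ≤ f k a ∧ f k a ≤ q k + δF k / 2 := by
      intro k a
      obtain ⟨hδ0, hδ1⟩ := hδF k
      have h1 := hmle k a
      have h2 := hMge k a
      have h3 := hMm k
      have h4 := hm0 k
      have h5 := hM1 k
      have h6 := (hfrange k a).1
      have h7 := (hfrange k a).2
      constructor
      · have : q k ≤ max (δF k / 2) ((m k + M k) / 2) :=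
          max_le_max le_rfl (min_le_left _ _)
        rcases max_cases (δF k / 2) ((m k + M k) / 2) with ⟨he, -⟩ | ⟨he, -⟩ <;>
          rw [he] at this <;> linarith
      · rcases le_or_gt ((m k + M k) / 2) (1 - δF k / 2) with h | h
        · have : min ((m k + M k) / 2) (1 - δF k / 2) = (m k + M k) / 2 := min_eq_left h
          rw [hqdef]; simp only [this]
          have := le_max_right (δF k / 2) ((m k + M k) / 2)
          linarith
        · have : min ((m k + M k) / 2) (1 - δF k / 2) = 1 - δF k / 2 := min_eq_right h.le
          rw [hqdef]; simp only [this]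
          have := le_max_right (δF k / 2) (1 - δF k / 2)
          linarith
    have hρq : ρ ∈ centroidFeasible R uL δL uLF vLF δF q := by
      refine ⟨hR, ?_, ?_⟩
      · -- linear part
        have hneL : ∀ ℓ : KL, (Finset.univ.image (fun a => dp (uL ℓ a) (ρ a))).Nonempty :=
          fun ℓ => (Finset.univ_nonempty).image _
        refine ⟨fun ℓ => ((Finset.univ.image (fun a => dp (uL ℓ a) (ρ a))).min' (hneL ℓ)
            + (Finset.univ.image (fun a => dp (uL ℓ a) (ρ a))).max' (hneL ℓ)) / 2, ?_⟩
        intro ℓ a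
        set S := Finset.univ.image (fun a => dp (uL ℓ a) (ρ a)) with hS
        obtain ⟨a1, -, ha1⟩ := Finset.mem_image.mp (S.max'_mem (hneL ℓ))
        obtain ⟨a0, -, ha0⟩ := Finset.mem_image.mp (S.min'_mem (hneL ℓ))
        have hmemS : dp (uL ℓ a) (ρ a) ∈ S := by
          rw [hS]; exact Finset.mem_image_of_mem _ (Finset.mem_univ a)
        have hle : S.min' (hneL ℓ) ≤ dp (uL ℓ a) (ρ a) := S.min'_le _ hmemS
        have hge : dp (uL ℓ a) (ρ a) ≤ S.max' (hneL ℓ) := S.le_max' _ hmemS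
        have hd := abs_le.mp (hL ℓ a1 a0)
        rw [ha1, ha0] at hd
        show |dp (uL ℓ a) (ρ a) - (S.min' (hneL ℓ) + S.max' (hneL ℓ)) / 2| ≤ δL ℓ / 2
        rw [abs_le]; constructor <;> linarith [hd.1, hd.2]
      · intro k a
        have hv := (hval a k (ρ a) (hR a)).1
        obtain ⟨h1, h2⟩ := hbound k a
        have e1 : dp (uLF k a) (ρ a) ≤ (q k + δF k / 2) * dp (vLF k a) (ρ a) := by
          have := (div_le_iff₀ hv).mp h2
          linarith
        have e2 : (q k - δF k / 2) * dp (vLF k a) (ρ a) ≤ dp (uLF k a) (ρ a) := by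
          have := (le_div_iff₀ hv).mp h1
          linarith
        constructor <;> linarith
    calc sInf ((fun q : KLF → ℝ =>
          sInf ((fun ρ : 𝒜 → Fin 3 → ℝ => ((∑ a, dp (γ a) (ρ a) : ℝ) : EReal)) ''
            centroidFeasible R uL δL uLF vLF δF q)) '' admissibleCentroids δF)
        ≤ sInf ((fun ρ : 𝒜 → Fin 3 → ℝ => ((∑ a, dp (γ a) (ρ a) : ℝ) : EReal)) ''
            centroidFeasible R uL δL uLF vLF δF q) := sInf_le ⟨q, hqQ, rfl⟩
      _ ≤ _ := sInf_le ⟨ρ, hρq, rfl⟩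
end

section
/- Under Setup S, fix loss-coefficient vectors γ_a ∈ ℝ³ for each a ∈ 𝒜 and define J((ρ_a)_{a∈𝒜}) := Σ_{a∈𝒜} ⟨γ_a, ρ_a⟩. Suppose q* ∈ Q and (ρ*_a)_{a∈𝒜} ∈ 𝔉(q*) satisfy J((ρ*_a)) ≤ J((ρ_a)) for every q ∈ Q and every (ρ_a) ∈ 𝔉(q). Then (ρ*_a) ∈ 𝔉₀ and J((ρ*_a)) ≤ J((ρ_a)) for every (ρ_a) ∈ 𝔉₀; that is, any optimizer of the inner problem at an optimal admissible centroid is an optimizer of the pairwise-disparity problem. -/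
private lemma clamp_aux (δ m x : ℝ) (hδ0 : 0 ≤ δ) (hδ1 : δ ≤ 1) (hx0 : 0 ≤ x)
    (hx1 : x ≤ 1) (h1 : m - δ/2 ≤ x) (h2 : x ≤ m + δ/2) :
    δ/2 ≤ max (δ/2) (min m (1 - δ/2)) ∧ max (δ/2) (min m (1 - δ/2)) ≤ 1 - δ/2 ∧
    max (δ/2) (min m (1 - δ/2)) - δ/2 ≤ x ∧ x ≤ max (δ/2) (min m (1 - δ/2)) + δ/2 := by
  rcases le_total m (1 - δ/2) with h | h
  · rw [min_eq_left h]
    rcases le_total (δ/2) m with h' | h'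
    · rw [max_eq_right h']
      exact ⟨h', h, by linarith, by linarith⟩
    · rw [max_eq_left h']
      exact ⟨le_refl _, by linarith, by linarith, by linarith⟩
  · rw [min_eq_right h, max_eq_right (by linarith)]
    exact ⟨by linarith, le_refl _, by linarith, by linarith⟩

theorem centroid_optimizer_is_pairwise_optimizer
    {𝒜 KL KLF : Type*} [Fintype 𝒜] [Nonempty 𝒜] [Fintype KL] [Fintype KLF]
    (R : 𝒜 → Set (Fin 3 → ℝ))
    (uL : KL → 𝒜 → Fin 3 → ℝ) (δL : KL → ℝ) (hδL : ∀ ℓ, 0 ≤ δL ℓ)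
    (uLF vLF : KLF → 𝒜 → Fin 3 → ℝ) (δF : KLF → ℝ)
    (hδF : ∀ k, 0 ≤ δF k ∧ δF k ≤ 1)
    (hval : ∀ a k, ∀ ρ ∈ R a,
      0 < dp (vLF k a) ρ ∧ 0 ≤ dp (uLF k a) ρ ∧ dp (uLF k a) ρ ≤ dp (vLF k a) ρ)
    (γ : 𝒜 → Fin 3 → ℝ)
    (qstar : KLF → ℝ) (hqstar : qstar ∈ admissibleCentroids δF)
    (ρstar : 𝒜 → Fin 3 → ℝ)
    (hρstar : ρstar ∈ centroidFeasible R uL δL uLF vLF δF qstar)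
    (hopt : ∀ q ∈ admissibleCentroids δF,
      ∀ ρ ∈ centroidFeasible R uL δL uLF vLF δF q,
        (∑ a, dp (γ a) (ρstar a)) ≤ ∑ a, dp (γ a) (ρ a)) :
    ρstar ∈ pairwiseFeasible R uL δL uLF vLF δF ∧
      ∀ ρ ∈ pairwiseFeasible R uL δL uLF vLF δF,
        (∑ a, dp (γ a) (ρstar a)) ≤ ∑ a, dp (γ a) (ρ a) := by
  obtain ⟨hR, ⟨qL, hqL⟩, hF⟩ := hρstar
  have hstar0 : ρstar ∈ pairwiseFeasible R uL δL uLF vLF δF := by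
    refine ⟨hR, ?_, ?_⟩
    · intro ℓ a a'
      have h1 := abs_le.1 (hqL ℓ a)
      have h2 := abs_le.1 (hqL ℓ a')
      rw [abs_le]
      constructor <;> linarith [h1.1, h1.2, h2.1, h2.2]
    · intro k a a'
      have hv := (hval a k _ (hR a)).1
      have hv' := (hval a' k _ (hR a')).1
      have ha := hF k a; have ha' := hF k a'
      have r1 : dp (uLF k a) (ρstar a) / dp (vLF k a) (ρstar a) ≤ qstar k + δF k / 2 :=
        (div_le_iff₀ hv).2 (by linarith [ha.1])
      have r2 : qstar k - δF k / 2 ≤ dp (uLF k a) (ρstar a) / dp (vLF k a) (ρstar a) :=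
        (le_div_iff₀ hv).2 (by linarith [ha.2])
      have r1' : dp (uLF k a') (ρstar a') / dp (vLF k a') (ρstar a') ≤ qstar k + δF k / 2 :=
        (div_le_iff₀ hv').2 (by linarith [ha'.1])
      have r2' : qstar k - δF k / 2 ≤ dp (uLF k a') (ρstar a') / dp (vLF k a') (ρstar a') :=
        (le_div_iff₀ hv').2 (by linarith [ha'.2])
      rw [abs_le]
      constructor <;> linarith
  refine ⟨hstar0, ?_⟩
  intro ρ hρ
  obtain ⟨hRρ, hLρ, hFρ⟩ := hρ
  set r : KLF → 𝒜 → ℝ := fun k a => dp (uLF k a) (ρ a) / dp (vLF k a) (ρ a) with hr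
  set m : KLF → ℝ := fun k =>
    (Finset.univ.inf' Finset.univ_nonempty (r k) +
     Finset.univ.sup' Finset.univ_nonempty (r k)) / 2 with hm
  set q : KLF → ℝ := fun k => max (δF k / 2) (min (m k) (1 - δF k / 2)) with hq
  have hrb : ∀ k a, 0 ≤ r k a ∧ r k a ≤ 1 := by
    intro k a
    have hv := hval a k _ (hRρ a)
    constructor
    · exact div_nonneg hv.2.1 hv.1.le
    · rw [div_le_one hv.1]; exact hv.2.2
  have hmb : ∀ k a, m k - δF k / 2 ≤ r k a ∧ r k a ≤ m k + δF k / 2 := by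
    intro k a
    obtain ⟨a1, -, h1⟩ := Finset.exists_mem_eq_sup' Finset.univ_nonempty (r k)
    obtain ⟨a2, -, h2⟩ := Finset.exists_mem_eq_inf' Finset.univ_nonempty (r k)
    have hd : |r k a1 - r k a2| ≤ δF k := hFρ k a1 a2
    rw [abs_le] at hd
    have hle : r k a ≤ Finset.univ.sup' Finset.univ_nonempty (r k) :=
      Finset.le_sup' (r k) (Finset.mem_univ a)
    have hge : Finset.univ.inf' Finset.univ_nonempty (r k) ≤ r k a :=
      Finset.inf'_le (r k) (Finset.mem_univ a)
    rw [h1] at hle; rw [h2] at hge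
    simp only [hm, h1, h2]
    constructor <;> linarith [hd.1, hd.2]
  have hclamp : ∀ k a, δF k / 2 ≤ q k ∧ q k ≤ 1 - δF k / 2 ∧
      q k - δF k / 2 ≤ r k a ∧ r k a ≤ q k + δF k / 2 := by
    intro k a
    exact clamp_aux (δF k) (m k) (r k a) (hδF k).1 (hδF k).2
      (hrb k a).1 (hrb k a).2 (hmb k a).1 (hmb k a).2
  have hqadm : q ∈ admissibleCentroids δF := by
    intro k
    exact ⟨(hclamp k (Classical.arbitrary 𝒜)).1, (hclamp k (Classical.arbitrary 𝒜)).2.1⟩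
  have hρfeas : ρ ∈ centroidFeasible R uL δL uLF vLF δF q := by
    refine ⟨hRρ, ?_, ?_⟩
    · refine ⟨fun ℓ =>
        (Finset.univ.inf' Finset.univ_nonempty (fun a => dp (uL ℓ a) (ρ a)) +
         Finset.univ.sup' Finset.univ_nonempty (fun a => dp (uL ℓ a) (ρ a))) / 2, ?_⟩
      intro ℓ a
      obtain ⟨a1, -, h1⟩ := Finset.exists_mem_eq_sup' Finset.univ_nonempty
        (fun a => dp (uL ℓ a) (ρ a))
      obtain ⟨a2, -, h2⟩ := Finset.exists_mem_eq_inf' Finset.univ_nonempty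
        (fun a => dp (uL ℓ a) (ρ a))
      have hd := abs_le.1 (hLρ ℓ a1 a2)
      have hle : dp (uL ℓ a) (ρ a) ≤
          Finset.univ.sup' Finset.univ_nonempty (fun a => dp (uL ℓ a) (ρ a)) :=
        Finset.le_sup' (fun a => dp (uL ℓ a) (ρ a)) (Finset.mem_univ a)
      have hge : Finset.univ.inf' Finset.univ_nonempty (fun a => dp (uL ℓ a) (ρ a)) ≤
          dp (uL ℓ a) (ρ a) :=
        Finset.inf'_le (fun a => dp (uL ℓ a) (ρ a)) (Finset.mem_univ a)
      rw [h1] at hle; rw [h2] at hge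
      rw [abs_le]
      beta_reduce
      rw [h1, h2]
      constructor <;> linarith [hd.1]
    · intro k a
      have hv := (hval a k _ (hRρ a)).1
      have hc := hclamp k a
      have e1 : r k a ≤ q k + δF k / 2 := hc.2.2.2
      have e2 : q k - δF k / 2 ≤ r k a := hc.2.2.1
      rw [hr] at e1 e2
      simp only at e1 e2
      constructor
      · have := (div_le_iff₀ hv).1 e1; linarith
      · have := (le_div_iff₀ hv).1 e2; linarith
  exact hopt q hqadm ρ hρfeas
end

section
/- Let π ∈ (0, 1), let FNR, FPR, q, δ be real numbers with δ ≥ 0, and set T := 1 − FNR, L := q − δ/2, U := q + δ/2. Assume L < 1, U < 1, and that the denominator D := π·T + (1 − π)·FPR is strictly positive. Define α_lo := L·(1 − π)/((1 − L)·π) and α_hi := U·(1 − π)/((1 − U)·π). Then |π·T/D − q| ≤ δ/2 if and only if α_lo·FPR ≤ T ≤ α_hi·FPR. -/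
theorem predictive_parity_band_linearization
    (π FNR FPR q δ : ℝ) (hπ : π ∈ Set.Ioo (0 : ℝ) 1) (hδ : 0 ≤ δ)
    (T L U : ℝ) (hT : T = 1 - FNR) (hL : L = q - δ / 2) (hU : U = q + δ / 2)
    (hL1 : L < 1) (hU1 : U < 1)
    (D : ℝ) (hD : D = π * T + (1 - π) * FPR) (hDpos : 0 < D)
    (αlo αhi : ℝ)
    (hαlo : αlo = L * (1 - π) / ((1 - L) * π))
    (hαhi : αhi = U * (1 - π) / ((1 - U) * π)) :
    |π * T / D - q| ≤ δ / 2 ↔ (αlo * FPR ≤ T ∧ T ≤ αhi * FPR) := by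
  obtain ⟨hπ0, hπ1⟩ := hπ
  have hLpos : 0 < (1 - L) * π := mul_pos (by linarith) hπ0
  have hUpos : 0 < (1 - U) * π := mul_pos (by linarith) hπ0
  have hx : π * T / D * D = π * T := div_mul_cancel₀ _ (ne_of_gt hDpos)
  set x := π * T / D with hxdef
  rw [abs_le, hαlo, hαhi, div_mul_eq_mul_div, div_le_iff₀ hLpos,
    div_mul_eq_mul_div, le_div_iff₀ hUpos]
  constructor
  · rintro ⟨h1, h2⟩
    constructor <;> [nlinarith; nlinarith]
  · rintro ⟨h1, h2⟩
    constructor <;> [nlinarith; nlinarith]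
end
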